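/- arXiv:0812.3694 — 6 statements merged into one kernel-verified Lean document; each statement's English description precedes it below -/
import Mathlib

section
/- Let m ≥ 1 be an integer, set N = 2m, and let x be a real number with |x| ≤ π/2. For j = 1, …, N define the phasor angles φ_j = ((N − (2j − 1))/N)·x. Let g : {1, …, N} → {−1, +1} satisfy the balanced condition Σ_{j=1}^{N} g(j) = 0, and let g_ASB be the anti-symmetric balanced assignment g_ASB(j) = +1 for 1 ≤ j ≤ m and g_ASB(j) = −1 for m+1 ≤ j ≤ N. Then |Σ_{j=1}^{N} g(j)·e^{iφ_j}| ≤ |Σ_{j=1}^{N} g_ASB(j)·e^{iφ_j}|. -/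
open Real Finset

lemma one_sub_cos_le_abs_sin (θ : ℝ) (h : |θ| ≤ π/2) : 1 - Real.cos θ ≤ |Real.sin θ| := by
  have hc : 0 ≤ Real.cos θ := by
    apply Real.cos_nonneg_of_mem_Icc
    constructor <;> [linarith [(abs_le.1 h).1]; exact (abs_le.1 h).2]
  nlinarith [Real.sin_sq_add_cos_sq θ, abs_nonneg (Real.sin θ), sq_abs (Real.sin θ),
    Real.cos_le_one θ]

lemma sum_pair (m N : ℕ) (hN : N = 2*m) (f : ℕ → ℝ) :
    ∑ j ∈ Icc 1 N, f j = ∑ j ∈ Icc 1 m, (f j + f (N+1-j)) := by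
  subst hN
  rw [Finset.sum_add_distrib]
  have hsplit : Icc 1 (2*m) = Icc 1 m ∪ Icc (m+1) (2*m) := by
    ext a; simp; omega
  rw [hsplit, Finset.sum_union (by
    simp [Finset.disjoint_left]; intro a h1 h2; omega)]
  congr 1
  apply Finset.sum_nbij' (fun j => 2*m+1-j) (fun j => 2*m+1-j)
  · intro a ha; simp at ha ⊢; omega
  · intro a ha; simp at ha ⊢; omega
  · intro a ha; simp at ha; omega
  · intro a ha; simp at ha; omega
  · intro a ha; simp at ha; congr 1; omega

lemma re_term (r t : ℝ) : ((r:ℂ) * Complex.exp (Complex.I * t)).re = r * Real.cos t := by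
  rw [mul_comm Complex.I]
  simp [Complex.exp_ofReal_mul_I_re, Complex.mul_re]

lemma im_term (r t : ℝ) : ((r:ℂ) * Complex.exp (Complex.I * t)).im = r * Real.sin t := by
  rw [mul_comm Complex.I]
  simp [Complex.exp_ofReal_mul_I_im, Complex.mul_im]


/-- Theorem 1 of the paper: among all balanced sign assignments `g` on `{1,…,N}`
(`N = 2m`), the magnitude of the phasor sum `∑ g(j)·exp(i φ_j)` with
`φ_j = ((N − (2j−1))/N)·x` is maximized by the anti-symmetric balanced assignment
(`+1` on the first half, `−1` on the second half). -/
theorem asb_maximizes_balanced_phasor_sum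
    (m : ℕ) (hm : 1 ≤ m) (N : ℕ) (hN : N = 2 * m)
    (x : ℝ) (hx : |x| ≤ π / 2)
    (g : ℕ → ℝ)
    (hg : ∀ j ∈ Finset.Icc 1 N, g j = 1 ∨ g j = -1)
    (hbal : ∑ j ∈ Finset.Icc 1 N, g j = 0) :
    ‖(∑ j ∈ Finset.Icc 1 N,
        (g j : ℂ) * Complex.exp (Complex.I *
          ((((N : ℝ) - (2 * (j : ℝ) - 1)) / (N : ℝ)) * x)))‖ ≤
    ‖(∑ j ∈ Finset.Icc 1 N,
        (if j ≤ m then (1 : ℂ) else -1) * Complex.exp (Complex.I *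
          ((((N : ℝ) - (2 * (j : ℝ) - 1)) / (N : ℝ)) * x)))‖ := by
  set θ : ℕ → ℝ := fun j => (((N : ℝ) - (2 * (j : ℝ) - 1)) / (N : ℝ)) * x with hθ
  have hNpos : (0:ℝ) < N := by
    have : 0 < N := by omega
    exact_mod_cast this
  -- basic angle facts
  have habs : ∀ j, 1 ≤ j → j ≤ N → |θ j| ≤ π/2 := by
    intro j h1 h2
    have h1' : (1:ℝ) ≤ (j:ℝ) := by exact_mod_cast h1
    have h2' : (j:ℝ) ≤ (N:ℝ) := by exact_mod_cast h2
    have hnum : |((N:ℝ) - (2*(j:ℝ)-1))| ≤ N := by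
      rw [abs_le]; constructor <;> linarith
    have : |θ j| ≤ |x| := by
      rw [hθ]; simp only [abs_mul, abs_div, abs_of_pos hNpos]
      calc |(N:ℝ) - (2*(j:ℝ)-1)| / N * |x| ≤ (N:ℝ)/N * |x| := by gcongr
        _ = |x| := by field_simp
    linarith
  have hanti : ∀ j, 1 ≤ j → j ≤ N → θ (N+1-j) = -θ j := by
    intro j h1 h2
    have hc : ((N+1-j : ℕ) : ℝ) = (N:ℝ) + 1 - (j:ℝ) := by
      have : j ≤ N + 1 := by omega
      push_cast [Nat.cast_sub this]; ring
    rw [hθ]; simp only [hc]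
    field_simp; ring
  -- re/im of the g-sum
  have hre : (∑ j ∈ Icc 1 N, (g j : ℂ) * Complex.exp (Complex.I * (θ j : ℝ))).re
      = ∑ j ∈ Icc 1 m, (g j + g (N+1-j)) * (Real.cos (θ j) - 1) := by
    rw [Complex.re_sum]
    have e1 : ∑ j ∈ Icc 1 N, ((g j : ℂ) * Complex.exp (Complex.I * (θ j : ℝ))).re
        = ∑ j ∈ Icc 1 N, g j * Real.cos (θ j) := by
      exact Finset.sum_congr rfl fun j _ => re_term (g j) (θ j)
    rw [e1, sum_pair m N hN]
    have hb : ∑ j ∈ Icc 1 m, (g j + g (N+1-j)) = 0 := by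
      rw [← sum_pair m N hN]; exact hbal
    have : ∑ j ∈ Icc 1 m, (g j + g (N+1-j)) * (Real.cos (θ j) - 1)
        = ∑ j ∈ Icc 1 m, ((g j + g (N+1-j)) * Real.cos (θ j)) - ∑ j ∈ Icc 1 m, (g j + g (N+1-j)) := by
      rw [← Finset.sum_sub_distrib]; exact Finset.sum_congr rfl fun j _ => by ring
    rw [this, hb, sub_zero]
    apply Finset.sum_congr rfl
    intro j hj
    simp only [Finset.mem_Icc] at hj
    rw [hanti j hj.1 (by omega), Real.cos_neg]
    ring
  have him : (∑ j ∈ Icc 1 N, (g j : ℂ) * Complex.exp (Complex.I * (θ j : ℝ))).im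
      = ∑ j ∈ Icc 1 m, (g j - g (N+1-j)) * Real.sin (θ j) := by
    rw [Complex.im_sum]
    have e1 : ∑ j ∈ Icc 1 N, ((g j : ℂ) * Complex.exp (Complex.I * (θ j : ℝ))).im
        = ∑ j ∈ Icc 1 N, g j * Real.sin (θ j) := by
      exact Finset.sum_congr rfl fun j _ => im_term (g j) (θ j)
    rw [e1, sum_pair m N hN]
    apply Finset.sum_congr rfl
    intro j hj
    simp only [Finset.mem_Icc] at hj
    rw [hanti j hj.1 (by omega), Real.sin_neg]
    ring
  -- bound the LHS
  have key : ‖(∑ j ∈ Icc 1 N, (g j : ℂ) * Complex.exp (Complex.I * (θ j : ℝ)))‖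
      ≤ ∑ j ∈ Icc 1 m, 2 * |Real.sin (θ j)| := by
    refine le_trans (Complex.norm_le_abs_re_add_abs_im _) ?_
    rw [hre, him]
    calc |∑ j ∈ Icc 1 m, (g j + g (N+1-j)) * (Real.cos (θ j) - 1)|
          + |∑ j ∈ Icc 1 m, (g j - g (N+1-j)) * Real.sin (θ j)|
        ≤ ∑ j ∈ Icc 1 m, |(g j + g (N+1-j)) * (Real.cos (θ j) - 1)|
          + ∑ j ∈ Icc 1 m, |(g j - g (N+1-j)) * Real.sin (θ j)| := by
          gcongr <;> exact Finset.abs_sum_le_sum_abs _ _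
      _ = ∑ j ∈ Icc 1 m, (|g j + g (N+1-j)| * (1 - Real.cos (θ j))
            + |g j - g (N+1-j)| * |Real.sin (θ j)|) := by
          rw [← Finset.sum_add_distrib]
          apply Finset.sum_congr rfl
          intro j hj
          simp only [Finset.mem_Icc] at hj
          rw [abs_mul, abs_mul, abs_sub_comm (Real.cos (θ j)) 1,
            abs_of_nonneg (by linarith [Real.cos_le_one (θ j)] : (0:ℝ) ≤ 1 - Real.cos (θ j))]
      _ ≤ ∑ j ∈ Icc 1 m, 2 * |Real.sin (θ j)| := by
          apply Finset.sum_le_sum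
          intro j hj
          simp only [Finset.mem_Icc] at hj
          have h1 : j ∈ Icc 1 N := by simp only [Finset.mem_Icc]; omega
          have h2 : N+1-j ∈ Icc 1 N := by simp only [Finset.mem_Icc]; omega
          have hs := one_sub_cos_le_abs_sin (θ j) (habs j hj.1 (by omega))
          have hcle := Real.cos_le_one (θ j)
          have hsa := abs_nonneg (Real.sin (θ j))
          rcases hg j h1 with ha | ha <;> rcases hg _ h2 with hb | hb <;>
            rw [ha, hb] <;> norm_num <;> linarith
  -- the RHS sum
  have hRim : (∑ j ∈ Icc 1 N, (if j ≤ m then (1:ℂ) else -1)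
        * Complex.exp (Complex.I * (θ j : ℝ))).im
      = ∑ j ∈ Icc 1 m, 2 * Real.sin (θ j) := by
    rw [Complex.im_sum]
    have e1 : ∑ j ∈ Icc 1 N, ((if j ≤ m then (1:ℂ) else -1) * Complex.exp (Complex.I * (θ j : ℝ))).im
        = ∑ j ∈ Icc 1 N, (if j ≤ m then (1:ℝ) else -1) * Real.sin (θ j) := by
      apply Finset.sum_congr rfl
      intro j _
      have : (if j ≤ m then (1:ℂ) else -1) = (((if j ≤ m then (1:ℝ) else -1) : ℝ) : ℂ) := by
        split_ifs <;> simp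
      rw [this, im_term]
    rw [e1, sum_pair m N hN]
    apply Finset.sum_congr rfl
    intro j hj
    simp only [Finset.mem_Icc] at hj
    rw [hanti j hj.1 (by omega), Real.sin_neg]
    have h1 : j ≤ m := hj.2
    have h2 : ¬ (N+1-j ≤ m) := by omega
    rw [if_pos h1, if_neg h2]
    ring
  -- sign of sin θ j for j ≤ m
  have hsin : ∀ j, 1 ≤ j → j ≤ m → (0 ≤ x → 0 ≤ Real.sin (θ j)) ∧ (x ≤ 0 → Real.sin (θ j) ≤ 0) := by
    intro j h1 h2
    have h1' : (1:ℝ) ≤ (j:ℝ) := by exact_mod_cast h1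
    have h2' : (j:ℝ) ≤ (m:ℝ) := by exact_mod_cast h2
    have hmN : (N:ℝ) = 2*(m:ℝ) := by exact_mod_cast hN
    have hcpos : 0 < ((N:ℝ) - (2*(j:ℝ)-1)) / (N:ℝ) := by
      apply div_pos _ hNpos; linarith
    have hcle : ((N:ℝ) - (2*(j:ℝ)-1)) / (N:ℝ) ≤ 1 := by
      rw [div_le_one hNpos]; linarith
    have habsj := habs j h1 (by omega)
    rw [abs_le] at habsj
    constructor
    · intro hx0
      apply Real.sin_nonneg_of_nonneg_of_le_pi
      · rw [hθ]; positivity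
      · have := Real.pi_pos; linarith [habsj.2]
    · intro hx0
      apply Real.sin_nonpos_of_nonpos_of_neg_pi_le
      · rw [hθ]; exact mul_nonpos_of_nonneg_of_nonpos (le_of_lt hcpos) hx0
      · have := Real.pi_pos; linarith [habsj.1]
  -- finish
  have hg1 : (∑ j ∈ Finset.Icc 1 N, (g j : ℂ) * Complex.exp (Complex.I *
          ((((N : ℝ) - (2 * (j : ℝ) - 1)) / (N : ℝ)) * x)))
      = ∑ j ∈ Icc 1 N, (g j : ℂ) * Complex.exp (Complex.I * (θ j : ℝ)) := by
    apply Finset.sum_congr rfl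
    intro j _
    congr 2
    rw [hθ]
    push_cast
    ring
  have hg2 : (∑ j ∈ Finset.Icc 1 N, (if j ≤ m then (1 : ℂ) else -1) * Complex.exp (Complex.I *
          ((((N : ℝ) - (2 * (j : ℝ) - 1)) / (N : ℝ)) * x)))
      = ∑ j ∈ Icc 1 N, (if j ≤ m then (1:ℂ) else -1) * Complex.exp (Complex.I * (θ j : ℝ)) := by
    apply Finset.sum_congr rfl
    intro j _
    congr 2
    rw [hθ]
    push_cast
    ring
  rw [hg1, hg2]
  refine le_trans key ?_
  refine le_trans ?_ (Complex.abs_im_le_norm _)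
  rw [hRim]
  rcases le_or_gt 0 x with hx0 | hx0
  · have heach : ∀ j ∈ Icc 1 m, 2 * |Real.sin (θ j)| = 2 * Real.sin (θ j) := by
      intro j hj; simp only [Finset.mem_Icc] at hj
      rw [abs_of_nonneg ((hsin j hj.1 hj.2).1 hx0)]
    rw [Finset.sum_congr rfl heach]
    exact le_abs_self _
  · have heach : ∀ j ∈ Icc 1 m, 2 * |Real.sin (θ j)| = -(2 * Real.sin (θ j)) := by
      intro j hj; simp only [Finset.mem_Icc] at hj
      rw [abs_of_nonpos ((hsin j hj.1 hj.2).2 (le_of_lt hx0))]; ring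
    rw [Finset.sum_congr rfl heach]
    calc ∑ j ∈ Icc 1 m, -(2 * Real.sin (θ j)) = -∑ j ∈ Icc 1 m, 2 * Real.sin (θ j) := by
          rw [Finset.sum_neg_distrib]
      _ ≤ |∑ j ∈ Icc 1 m, 2 * Real.sin (θ j)| := neg_le_abs _
end

section
/- Let P > 0, let N = 2m be an even positive integer, and let z ∈ {0,1}^N be a balanced string (exactly N/2 of its bits equal 1). Then for every real x with 0 < |P·x| ≤ π/2, |Σ_{j=1}^{N} (−1)^{z_j}·e^{i((N−(2j−1))/N)·P·x}| ≤ (1 − cos(P·x)) / |sin(P·x/N)|. Consequently the encoded position amplitude satisfies |(sin(Px/N)/(√(Pπ)·x))·Σ_{j=1}^{N} (−1)^{z_j}·e^{i((N−(2j−1))/N)·P·x}|² ≤ (cos(Px) − 1)²/(P·π·x²). -/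
open Real Finset

private lemma aux_one_sub_cos_le_sin {a : ℝ} (h0 : 0 ≤ a) (h : a ≤ π / 2) :
    1 - Real.cos a ≤ Real.sin a := by
  have hπ := Real.pi_pos
  have hs : 0 ≤ Real.sin a :=
    Real.sin_nonneg_of_nonneg_of_le_pi h0 (h.trans (by linarith))
  have hc : 0 ≤ Real.cos a := Real.cos_nonneg_of_mem_Icc ⟨by linarith, h⟩
  nlinarith [Real.sin_sq_add_cos_sq a]

private lemma aux_abs_sin {y : ℝ} (h : |y| ≤ π) : |Real.sin y| = Real.sin |y| := by
  rcases le_or_gt 0 y with hy | hy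
  · rw [abs_of_nonneg hy,
      abs_of_nonneg (Real.sin_nonneg_of_nonneg_of_le_pi hy (by rwa [abs_of_nonneg hy] at h))]
  · have h1 : 0 ≤ Real.sin (-y) :=
      Real.sin_nonneg_of_nonneg_of_le_pi (by linarith) (by rwa [abs_of_neg hy] at h)
    rw [Real.sin_neg] at h1
    rw [abs_of_neg hy, Real.sin_neg]
    exact abs_of_nonpos (by linarith)

private lemma aux_telescope (φ : ℝ) (m : ℕ) :
    (∑ k ∈ Finset.range m, Real.sin ((2 * (k : ℝ) + 1) * φ)) * Real.sin φ
      = (1 - Real.cos (2 * (m : ℝ) * φ)) / 2 := by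
  induction m with
  | zero => simp
  | succ n ih =>
    rw [Finset.sum_range_succ, add_mul, ih]
    have h2 : Real.cos (2 * (n : ℝ) * φ) - Real.cos (2 * ((n : ℝ) + 1) * φ)
        = 2 * Real.sin ((2 * (n : ℝ) + 1) * φ) * Real.sin φ := by
      rw [Real.cos_sub_cos,
        show (2 * (n : ℝ) * φ + 2 * ((n : ℝ) + 1) * φ) / 2 = (2 * (n : ℝ) + 1) * φ by ring,
        show (2 * (n : ℝ) * φ - 2 * ((n : ℝ) + 1) * φ) / 2 = -φ by ring, Real.sin_neg]
      ring
    push_cast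
    linarith

/-- Corollary of Theorem 1: for any balanced `N`-bit string `z`, on the measurement
window `0 < |P·x| ≤ π/2` the balanced phasor sum is dominated by
`(1 − cos(Px))/|sin(Px/N)|`, and consequently the encoded position density is
dominated by the anti-symmetric balanced density `(cos(Px)−1)²/(Pπx²)`. -/
theorem balanced_density_le_asb_density
    (P : ℝ) (hP : 0 < P) (m N : ℕ) (hm : 1 ≤ m) (hN : N = 2 * m)
    (z : ℕ → Bool)
    (hbal : ((Finset.Icc 1 N).filter (fun j => z j = true)).card = m)
    (x : ℝ) (hx0 : 0 < |P * x|) (hx : |P * x| ≤ π / 2) :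
    Norm.norm (∑ j ∈ Finset.Icc 1 N,
        (if z j then (-1 : ℂ) else 1) * Complex.exp (Complex.I *
          ((((N : ℝ) - (2 * (j : ℝ) - 1)) / (N : ℝ)) * (P * x)))) ≤
      (1 - Real.cos (P * x)) / |Real.sin (P * x / N)| ∧
    (Norm.norm (((Real.sin (P * x / N) / (Real.sqrt (P * π) * x)) : ℂ) *
        ∑ j ∈ Finset.Icc 1 N,
          (if z j then (-1 : ℂ) else 1) * Complex.exp (Complex.I *
            ((((N : ℝ) - (2 * (j : ℝ) - 1)) / (N : ℝ)) * (P * x))))) ^ 2 ≤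
      (Real.cos (P * x) - 1) ^ 2 / (P * π * x ^ 2) := by
  have hπ := Real.pi_pos
  have hN1 : 1 ≤ N := by omega
  set t := P * x with ht
  have htne : t ≠ 0 := by
    intro h; rw [h] at hx0; simp at hx0
  have hxne : x ≠ 0 := fun h => htne (by rw [ht, h, mul_zero])
  have hNR : (0 : ℝ) < N := by exact_mod_cast Nat.pos_of_ne_zero (by omega)
  set c : ℕ → ℝ := fun k => (((N : ℝ) - (2 * (k : ℝ) + 1)) / N) * t with hc
  set e : ℕ → ℝ := fun k => if z (1 + k) then -1 else 1 with he
  set S := ∑ k ∈ Finset.range N, ((e k : ℝ) : ℂ) * Complex.exp ((c k : ℂ) * Complex.I)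
    with hSdef
  -- rewrite the statement's sum as S
  have hgoal : (∑ j ∈ Finset.Icc 1 N,
        (if z j then (-1 : ℂ) else 1) * Complex.exp (Complex.I *
          ((((N : ℝ) - (2 * (j : ℝ) - 1)) / (N : ℝ)) * (P * x)))) = S := by
    rw [hSdef, ← Finset.Ico_add_one_right_eq_Icc, Finset.sum_Ico_eq_sum_range]
    refine Finset.sum_congr (by norm_num) fun k _ => ?_
    have h1 : (if z (1 + k) then (-1 : ℂ) else 1) = ((e k : ℝ) : ℂ) := by
      by_cases h : z (1 + k) <;> simp [he, h]
    rw [h1]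
    congr 1
    simp only [hc, ht]
    push_cast
    ring
  -- real and imaginary parts
  have hre : S.re = ∑ k ∈ Finset.range N, e k * Real.cos (c k) := by
    rw [hSdef, Complex.re_sum]
    exact Finset.sum_congr rfl fun k _ => by
      rw [Complex.re_ofReal_mul, Complex.exp_ofReal_mul_I_re]
  have him : S.im = ∑ k ∈ Finset.range N, e k * Real.sin (c k) := by
    rw [hSdef, Complex.im_sum]
    exact Finset.sum_congr rfl fun k _ => by
      rw [Complex.im_ofReal_mul, Complex.exp_ofReal_mul_I_im]
  -- balance
  have hbal' : ∑ k ∈ Finset.range N, e k = 0 := by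
    have h1 : ∑ j ∈ Finset.Icc 1 N, (if z j then (-1 : ℝ) else 1)
        = ∑ k ∈ Finset.range N, e k := by
      rw [← Finset.Ico_add_one_right_eq_Icc, Finset.sum_Ico_eq_sum_range]
      exact Finset.sum_congr (by norm_num) fun k _ => by simp [he]
    have h2 : ∀ j, (if z j then (-1 : ℝ) else 1)
        = 1 - 2 * (if z j = true then (1 : ℝ) else 0) := by
      intro j; by_cases h : z j <;> simp [h] <;> norm_num
    rw [← h1]
    simp_rw [h2]
    rw [Finset.sum_sub_distrib, Finset.sum_const, ← Finset.mul_sum, Finset.sum_boole]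
    simp only [hbal, Nat.card_Icc, Nat.add_sub_cancel, nsmul_eq_mul, mul_one]
    rw [hN]; push_cast; ring
  -- reflection facts
  have hcrefl : ∀ k < N, c (N - 1 - k) = -c k := by
    intro k hk
    have h1 : ((N - 1 - k : ℕ) : ℝ) = (N : ℝ) - 1 - k := by
      have h2 : N - 1 - k = N - (1 + k) := by omega
      rw [h2, Nat.cast_sub (by omega)]
      push_cast; ring
    simp only [hc, h1]; ring
  have hcbound : ∀ k < N, |c k| ≤ |t| := by
    intro k hk
    have hkR : (k : ℝ) < N := by exact_mod_cast hk
    have hkR' : (k : ℝ) + 1 ≤ N := by exact_mod_cast hk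
    have h1 : |(N : ℝ) - (2 * k + 1)| ≤ N := by
      rw [abs_le]; constructor <;> linarith
    calc |c k| = |(N : ℝ) - (2 * k + 1)| / N * |t| := by
          rw [hc]; rw [abs_mul, abs_div, abs_of_pos hNR]
      _ ≤ 1 * |t| := by
          apply mul_le_mul_of_nonneg_right _ (abs_nonneg t)
          exact (div_le_one hNR).mpr h1
      _ = |t| := one_mul _
  -- fold the sums
  have hR2 : 2 * S.re
      = ∑ k ∈ Finset.range N, (e k + e (N - 1 - k)) * (Real.cos (c k) - 1) := by
    have hA : S.re = ∑ k ∈ Finset.range N, e (N - 1 - k) * Real.cos (c k) := by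
      rw [hre, ← Finset.sum_range_reflect (fun k => e k * Real.cos (c k)) N]
      refine Finset.sum_congr rfl fun k hk => ?_
      rw [hcrefl k (Finset.mem_range.mp hk), Real.cos_neg]
    have hz0 : ∑ k ∈ Finset.range N, (e k + e (N - 1 - k)) = 0 := by
      rw [Finset.sum_add_distrib, hbal', Finset.sum_range_reflect (fun k => e k) N, hbal']
      ring
    have hz1 : ∑ k ∈ Finset.range N, (e k + e (N - 1 - k)) * (Real.cos (c k) - 1)
        = (∑ k ∈ Finset.range N, (e k + e (N - 1 - k)) * Real.cos (c k))
          - ∑ k ∈ Finset.range N, (e k + e (N - 1 - k)) := by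
      rw [← Finset.sum_sub_distrib]
      exact Finset.sum_congr rfl fun k _ => by ring
    rw [hz1, hz0, sub_zero]
    calc 2 * S.re = (∑ k ∈ Finset.range N, e k * Real.cos (c k))
          + ∑ k ∈ Finset.range N, e (N - 1 - k) * Real.cos (c k) := by
          rw [← hre, ← hA]; ring
      _ = ∑ k ∈ Finset.range N, (e k * Real.cos (c k) + e (N - 1 - k) * Real.cos (c k)) :=
          Finset.sum_add_distrib.symm
      _ = ∑ k ∈ Finset.range N, (e k + e (N - 1 - k)) * Real.cos (c k) :=
          Finset.sum_congr rfl fun k _ => by ring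
  have hI2 : 2 * S.im
      = ∑ k ∈ Finset.range N, (e k - e (N - 1 - k)) * Real.sin (c k) := by
    have hA : S.im = ∑ k ∈ Finset.range N, -(e (N - 1 - k) * Real.sin (c k)) := by
      rw [him, ← Finset.sum_range_reflect (fun k => e k * Real.sin (c k)) N]
      refine Finset.sum_congr rfl fun k hk => ?_
      rw [hcrefl k (Finset.mem_range.mp hk), Real.sin_neg]; ring
    calc 2 * S.im = (∑ k ∈ Finset.range N, e k * Real.sin (c k))
          + ∑ k ∈ Finset.range N, -(e (N - 1 - k) * Real.sin (c k)) := by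
          rw [← him, ← hA]; ring
      _ = _ := by
          rw [← Finset.sum_add_distrib]
          exact Finset.sum_congr rfl fun k _ => by ring
  -- pointwise bound
  have hpoint : ∀ k ∈ Finset.range N,
      |(e k + e (N - 1 - k)) * (Real.cos (c k) - 1)|
        + |(e k - e (N - 1 - k)) * Real.sin (c k)| ≤ 2 * |Real.sin (c k)| := by
    intro k hk
    have hk' := Finset.mem_range.mp hk
    have hb : |c k| ≤ π / 2 := (hcbound k hk').trans hx
    have h1 : 1 - Real.cos (c k) ≤ |Real.sin (c k)| := by
      have h3 := aux_one_sub_cos_le_sin (abs_nonneg (c k)) hb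
      rwa [Real.cos_abs, ← aux_abs_sin (hb.trans (by linarith))] at h3
    have h2 : 0 ≤ 1 - Real.cos (c k) := by
      have := Real.cos_le_one (c k); linarith
    have hAB : |e k + e (N - 1 - k)| + |e k - e (N - 1 - k)| = 2 := by
      simp only [he]
      by_cases ha : z (1 + k) <;> by_cases hb' : z (1 + (N - 1 - k)) <;>
        norm_num [ha, hb']
    rw [abs_mul, abs_mul, abs_sub_comm (Real.cos (c k)) 1, abs_of_nonneg h2]
    nlinarith [abs_nonneg (e k + e (N - 1 - k)), abs_nonneg (e k - e (N - 1 - k)),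
      abs_nonneg (Real.sin (c k))]
  -- combine: |S| ≤ ∑ |sin (c k)|
  have hS1 : ‖S‖ ≤ ∑ k ∈ Finset.range N, |Real.sin (c k)| := by
    have h0 := Complex.norm_le_abs_re_add_abs_im S
    have hr : |2 * S.re| ≤ ∑ k ∈ Finset.range N,
        |(e k + e (N - 1 - k)) * (Real.cos (c k) - 1)| := by
      rw [hR2]; exact Finset.abs_sum_le_sum_abs _ _
    have hi : |2 * S.im| ≤ ∑ k ∈ Finset.range N,
        |(e k - e (N - 1 - k)) * Real.sin (c k)| := by
      rw [hI2]; exact Finset.abs_sum_le_sum_abs _ _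
    have hsum2 : (∑ k ∈ Finset.range N,
          |(e k + e (N - 1 - k)) * (Real.cos (c k) - 1)|)
        + (∑ k ∈ Finset.range N, |(e k - e (N - 1 - k)) * Real.sin (c k)|)
        ≤ ∑ k ∈ Finset.range N, 2 * |Real.sin (c k)| := by
      rw [← Finset.sum_add_distrib]
      exact Finset.sum_le_sum hpoint
    rw [abs_mul, abs_two] at hr hi
    rw [← Finset.mul_sum] at hsum2
    linarith
  -- the φ facts
  set φ := |t| / N with hφ
  have hφpos : 0 < φ := div_pos hx0 hNR
  have hφ1 : φ ≤ π / 2 := by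
    refine le_trans ?_ hx
    rw [hφ]
    exact div_le_self (abs_nonneg t) (by exact_mod_cast hN1)
  have hsinφ : 0 < Real.sin φ :=
    Real.sin_pos_of_pos_of_lt_pi hφpos (by linarith)
  have hφabs : φ = |t / N| := by rw [hφ, abs_div, abs_of_pos hNR]
  have hsin : Real.sin φ = |Real.sin (t / N)| := by
    rw [hφabs, ← aux_abs_sin]
    rw [← hφabs]; linarith
  have hsinpos : 0 < |Real.sin (t / N)| := hsin ▸ hsinφ
  have hsne : Real.sin (t / N) ≠ 0 := by
    intro h; rw [h] at hsinpos; simp at hsinpos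
  -- evaluate the sum of |sin|
  have hkey : ∑ k ∈ Finset.range N, |Real.sin (c k)|
      = (1 - Real.cos t) / |Real.sin (t / N)| := by
    have habs : ∀ k ∈ Finset.range N,
        |Real.sin (c k)| = Real.sin (|(N : ℝ) - (2 * k + 1)| * φ) := by
      intro k hk
      have hk' := Finset.mem_range.mp hk
      have h1 : |c k| = |(N : ℝ) - (2 * k + 1)| * φ := by
        rw [hc, hφ, abs_mul, abs_div, abs_of_pos hNR]; ring
      rw [aux_abs_sin ((hcbound k hk').trans (by linarith)), h1]
    rw [Finset.sum_congr rfl habs]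
    have hNm : (N : ℝ) = 2 * m := by rw [hN]; push_cast; ring
    have hsplit : ∑ k ∈ Finset.range N, Real.sin (|(N : ℝ) - (2 * k + 1)| * φ)
        = (∑ k ∈ Finset.range m, Real.sin (|(N : ℝ) - (2 * k + 1)| * φ))
          + ∑ k ∈ Finset.range m, Real.sin (|(N : ℝ) - (2 * ((m + k : ℕ) : ℝ) + 1)| * φ) := by
      rw [← Finset.sum_range_add_sum_Ico _ (show m ≤ N by omega),
        Finset.sum_Ico_eq_sum_range]
      rw [show N - m = m by omega]
    have hfirst : ∑ k ∈ Finset.range m, Real.sin (|(N : ℝ) - (2 * k + 1)| * φ)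
        = ∑ k ∈ Finset.range m, Real.sin ((2 * (k : ℝ) + 1) * φ) := by
      rw [← Finset.sum_range_reflect (fun k => Real.sin ((2 * (k : ℝ) + 1) * φ)) m]
      refine Finset.sum_congr rfl fun k hk => ?_
      have hk' := Finset.mem_range.mp hk
      have h1 : ((m - 1 - k : ℕ) : ℝ) = (m : ℝ) - 1 - k := by
        have h3 : m - 1 - k = m - (1 + k) := by omega
        rw [h3, Nat.cast_sub (by omega)]; push_cast; ring
      have h4 : (k : ℝ) ≤ (m : ℝ) - 1 := by
        have h5 : (k : ℕ) ≤ m - 1 := by omega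
        calc (k : ℝ) ≤ ((m - 1 : ℕ) : ℝ) := by exact_mod_cast h5
          _ = (m : ℝ) - 1 := by rw [Nat.cast_sub (by omega)]; push_cast; ring
      have h2 : |(N : ℝ) - (2 * k + 1)| = (N : ℝ) - (2 * k + 1) := by
        apply abs_of_nonneg; rw [hNm]; linarith
      rw [h2, h1]
      congr 1
      rw [hNm]; ring
    have hsecond : ∑ k ∈ Finset.range m, Real.sin (|(N : ℝ) - (2 * ((m + k : ℕ) : ℝ) + 1)| * φ)
        = ∑ k ∈ Finset.range m, Real.sin ((2 * (k : ℝ) + 1) * φ) := by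
      refine Finset.sum_congr rfl fun k hk => ?_
      have h2 : |(N : ℝ) - (2 * ((m + k : ℕ) : ℝ) + 1)| = 2 * (k : ℝ) + 1 := by
        have h6 : ((m + k : ℕ) : ℝ) = (m : ℝ) + k := by push_cast; ring
        rw [h6, hNm,
          show (2 : ℝ) * m - (2 * ((m : ℝ) + k) + 1) = -(2 * (k : ℝ) + 1) by ring, abs_neg]
        exact abs_of_nonneg (by positivity)
      rw [h2]
    rw [hsplit, hfirst, hsecond]
    have htel := aux_telescope φ m
    have h2m : 2 * (m : ℝ) * φ = |t| := by
      rw [hφ]; field_simp [hNm]; linarith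
    have hcos : Real.cos (2 * (m : ℝ) * φ) = Real.cos t := by
      rw [h2m, Real.cos_abs]
    rw [← hcos, ← hsin, eq_div_iff (ne_of_gt hsinφ)]
    linarith [htel]
  have hmain : ‖S‖ ≤ (1 - Real.cos t) / |Real.sin (t / N)| :=
    hS1.trans (le_of_eq hkey)
  constructor
  · rw [hgoal]; exact hmain
  · rw [hgoal, norm_mul, norm_div, norm_mul, Complex.norm_real, Complex.norm_real,
      Complex.norm_real, Real.norm_eq_abs, Real.norm_eq_abs, Real.norm_eq_abs, abs_of_nonneg (Real.sqrt_nonneg _)]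
    set C := |Real.sin (t / ↑N)| / (Real.sqrt (P * π) * |x|) with hC
    have hCpos : 0 ≤ C := by positivity
    have hstep : C * ‖S‖ ≤ C * ((1 - Real.cos t) / |Real.sin (t / N)|) :=
      mul_le_mul_of_nonneg_left hmain hCpos
    have hfin : (C * ((1 - Real.cos t) / |Real.sin (t / N)|)) ^ 2
        = (Real.cos t - 1) ^ 2 / (P * π * x ^ 2) := by
      have hs2 : 0 < Real.sin (t / N) ^ 2 := by
        rw [← sq_abs]; exact pow_pos hsinpos 2
      rw [hC, div_mul_div_comm, div_pow, mul_pow, mul_pow, sq_abs]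
      rw [mul_pow, sq_abs, Real.sq_sqrt (by positivity : (0 : ℝ) ≤ P * π)]
      rw [div_eq_div_iff (by positivity) (by positivity)]
      ring
    calc (C * ‖S‖) ^ 2
        ≤ (C * ((1 - Real.cos t) / |Real.sin (t / N)|)) ^ 2 :=
          pow_le_pow_left₀ (by positivity) hstep 2
      _ = _ := hfin
end

section
/- Let P > 0 and define, for δ > 0, the separation g(δ) = ∫_{−δ}^{δ} (sin²(P x) − (cos(P x) − 1)²) / (P π x²) dx. Then for every δ > 0, g(δ) ≤ g(π/(2P)); that is, the separation between the constant-case and worst-case balanced detection probabilities attains its global maximum at δ = π/(2P). -/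
open Real intervalIntegral

noncomputable def phi (u : ℝ) : ℝ := (Real.sin u ^ 2 - (Real.cos u - 1) ^ 2) / u ^ 2

lemma phi_eq (u : ℝ) :
    phi u = 2 * (Real.cos u * (1 - Real.cos u)) / u ^ 2 := by
  unfold phi
  have h : Real.sin u ^ 2 - (Real.cos u - 1) ^ 2
      = 2 * (Real.cos u * (1 - Real.cos u)) := by
    have := Real.sin_sq_add_cos_sq u
    nlinarith
  rw [h]

lemma one_sub_cos_le (u : ℝ) : 1 - Real.cos u ≤ u ^ 2 / 2 := by
  have h := Real.cos_two_mul (u/2)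
  rw [show 2*(u/2)=u by ring] at h
  nlinarith [Real.sin_sq_le_sq (x := u/2), Real.sin_sq_add_cos_sq (u/2)]

lemma phi_abs_le (u : ℝ) : |phi u| ≤ 1 := by
  rcases eq_or_ne u 0 with h | h
  · simp [phi, h]
  · rw [phi_eq]
    rw [abs_div, abs_of_nonneg (sq_nonneg u), div_le_one (by positivity)]
    have h1 : 1 - Real.cos u ≤ u ^ 2 / 2 := one_sub_cos_le u
    have h2 : (0:ℝ) ≤ 1 - Real.cos u := by nlinarith [Real.cos_le_one u]
    have h3 : |Real.cos u| ≤ 1 := Real.abs_cos_le_one u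
    rw [abs_mul, abs_mul, abs_of_nonneg h2]
    calc |2| * (|Real.cos u| * (1 - Real.cos u)) ≤ 2 * (1 * (u^2/2)) := by
          rw [abs_two]
          gcongr
      _ = u ^ 2 := by ring

lemma phi_intable (a b : ℝ) : IntervalIntegrable phi MeasureTheory.volume a b := by
  apply IntervalIntegrable.mono_fun' (g := fun _ => (1:ℝ)) intervalIntegrable_const
  · apply Measurable.aestronglyMeasurable
    unfold phi
    measurability
  · filter_upwards with x using by simpa using phi_abs_le x

lemma phi_neg (u : ℝ) : phi (-u) = phi u := by simp [phi]

lemma phi_int_neg (a b : ℝ) :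
    ∫ x in (-b)..(-a), phi x = ∫ x in a..b, phi x := by
  rw [← intervalIntegral.integral_comp_neg phi]
  simp [phi_neg]

lemma phi_nonneg {u : ℝ} (h : 0 ≤ Real.cos u) : 0 ≤ phi u := by
  rw [phi_eq]
  have : (0:ℝ) ≤ 1 - Real.cos u := by nlinarith [Real.cos_le_one u]
  positivity

lemma phi_nonpos {u : ℝ} (h : Real.cos u ≤ 0) : phi u ≤ 0 := by
  rw [phi_eq]
  apply div_nonpos_of_nonpos_of_nonneg _ (sq_nonneg u)
  have : (0:ℝ) ≤ 1 - Real.cos u := by nlinarith [Real.cos_le_one u]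
  nlinarith

/-- cos is nonpositive on `[π/2 + 2kπ, 3π/2 + 2kπ]`. -/
lemma cos_nonpos_shift {u : ℝ} (k : ℕ) (h1 : π/2 + 2*π*k ≤ u) (h2 : u ≤ π/2 + 2*π*k + π) :
    Real.cos u ≤ 0 := by
  have heq : Real.cos u = Real.cos (u - 2*π*k) := by
    conv_lhs => rw [show u = (u - 2*π*(k:ℝ)) + ((k:ℤ):ℝ)*(2*π) by push_cast; ring]
    exact Real.cos_add_int_mul_two_pi _ k
  rw [heq]
  apply Real.cos_nonpos_of_pi_div_two_le_of_le <;> linarith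

/-- cos is nonnegative on `[3π/2 + 2kπ, 5π/2 + 2kπ]`. -/
lemma cos_nonneg_shift {u : ℝ} (k : ℕ) (h1 : π/2 + 2*π*k + π ≤ u)
    (h2 : u ≤ π/2 + 2*π*(k+1)) : 0 ≤ Real.cos u := by
  have heq : Real.cos u = Real.cos (u - 2*π*((k:ℝ)+1)) := by
    conv_lhs => rw [show u = (u - 2*π*((k:ℝ)+1)) + (((k:ℤ)+1:ℤ):ℝ)*(2*π) by push_cast; ring]
    exact Real.cos_add_int_mul_two_pi _ (k+1)
  rw [heq]
  apply Real.cos_nonneg_of_mem_Icc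
  constructor <;> [linarith; linarith]

lemma psi_int (a : ℝ) :
    ∫ u in a..(a + 2*π), Real.cos u * (1 - Real.cos u) = -π := by
  have h : ∀ u : ℝ, Real.cos u * (1 - Real.cos u) = Real.cos u - Real.cos u ^ 2 := by
    intro u; ring
  simp_rw [h]
  rw [intervalIntegral.integral_sub (f := Real.cos) (g := fun u => Real.cos u ^ 2) (Real.continuous_cos.intervalIntegrable _ _)
      ((Real.continuous_cos.pow 2).intervalIntegrable _ _)]
  rw [integral_cos, integral_cos_sq]
  have hs : Real.sin (a + 2*π) = Real.sin a := Real.sin_add_two_pi a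
  have hc : Real.cos (a + 2*π) = Real.cos a := Real.cos_add_two_pi a
  rw [hs, hc]; ring

/-- Integral of `phi` over one full period starting at `π/2 + 2πk` is nonpositive. -/
lemma phi_period_nonpos (k : ℕ) :
    ∫ u in (π/2 + 2*π*k)..(π/2 + 2*π*k + 2*π), phi u ≤ 0 := by
  have hπ := Real.pi_pos
  have ha0 : (0:ℝ) < π/2 + 2*π*k := by positivity
  have hM0 : (0:ℝ) < π/2 + 2*π*k + π := by positivity
  have hle : ∀ u ∈ Set.Icc (π/2 + 2*π*(k:ℝ)) (π/2 + 2*π*k + 2*π),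
      phi u ≤ Real.cos u * (1 - Real.cos u) * (2 / (π/2 + 2*π*k + π)^2) := by
    intro u hu
    obtain ⟨h1, h2⟩ := hu
    have hu0 : 0 < u := lt_of_lt_of_le ha0 h1
    rw [phi_eq]
    have h1c : (0:ℝ) ≤ 1 - Real.cos u := by nlinarith [Real.cos_le_one u]
    rcases le_or_gt u (π/2 + 2*π*k + π) with hcase | hcase
    · have hcos : Real.cos u ≤ 0 := cos_nonpos_shift k h1 hcase
      rw [div_le_iff₀ (by positivity)]
      have hψ : Real.cos u * (1 - Real.cos u) * (2 / (π/2 + 2*π*k + π)^2) ≤ 0 :=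
        mul_nonpos_of_nonpos_of_nonneg (by nlinarith) (by positivity)
      have huM : u^2 ≤ (π/2 + 2*π*k + π)^2 := by nlinarith
      calc 2 * (Real.cos u * (1 - Real.cos u))
          = Real.cos u * (1 - Real.cos u) * (2 / (π/2 + 2*π*k + π)^2)
              * (π/2 + 2*π*k + π)^2 := by
            field_simp
        _ ≤ Real.cos u * (1 - Real.cos u) * (2 / (π/2 + 2*π*k + π)^2) * u^2 :=
            mul_le_mul_of_nonpos_left huM hψ
    · have hcos : 0 ≤ Real.cos u :=
        cos_nonneg_shift k (le_of_lt hcase) (by push_cast; linarith)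
      rw [div_le_iff₀ (by positivity)]
      have hψ : 0 ≤ Real.cos u * (1 - Real.cos u) * (2 / (π/2 + 2*π*k + π)^2) := by
        positivity
      have huM : (π/2 + 2*π*k + π)^2 ≤ u^2 := by nlinarith
      calc 2 * (Real.cos u * (1 - Real.cos u))
          = Real.cos u * (1 - Real.cos u) * (2 / (π/2 + 2*π*k + π)^2)
              * (π/2 + 2*π*k + π)^2 := by
            field_simp
        _ ≤ Real.cos u * (1 - Real.cos u) * (2 / (π/2 + 2*π*k + π)^2) * u^2 :=
            mul_le_mul_of_nonneg_left huM hψ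
  have hint2 : IntervalIntegrable
      (fun u => Real.cos u * (1 - Real.cos u) * (2 / (π/2 + 2*π*k + π)^2))
      MeasureTheory.volume (π/2 + 2*π*k) (π/2 + 2*π*k + 2*π) := by
    apply Continuous.intervalIntegrable
    continuity
  calc (∫ u in (π/2 + 2*π*(k:ℝ))..(π/2 + 2*π*k + 2*π), phi u)
      ≤ ∫ u in (π/2 + 2*π*(k:ℝ))..(π/2 + 2*π*k + 2*π),
          Real.cos u * (1 - Real.cos u) * (2 / (π/2 + 2*π*k + π)^2) :=
        intervalIntegral.integral_mono_on (by linarith) (phi_intable _ _) hint2 hle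
    _ = (∫ u in (π/2 + 2*π*(k:ℝ))..(π/2 + 2*π*k + 2*π),
          Real.cos u * (1 - Real.cos u)) * (2 / (π/2 + 2*π*k + π)^2) := by
        rw [← intervalIntegral.integral_mul_const]
    _ = -π * (2 / (π/2 + 2*π*k + π)^2) := by rw [psi_int]
    _ ≤ 0 := mul_nonpos_of_nonpos_of_nonneg (by linarith) (by positivity)

lemma H_nonpos_at (k : ℕ) : ∫ u in (π/2)..(π/2 + 2*π*k), phi u ≤ 0 := by
  induction k with
  | zero => simp
  | succ n ih =>
    have hπ := Real.pi_pos
    have hadd : (∫ u in (π/2)..(π/2 + 2*π*n), phi u)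
        + ∫ u in (π/2 + 2*π*n)..(π/2 + 2*π*n + 2*π), phi u
        = ∫ u in (π/2)..(π/2 + 2*π*((n:ℝ)+1)), phi u := by
      have h := intervalIntegral.integral_add_adjacent_intervals
        (phi_intable (π/2) (π/2 + 2*π*n)) (phi_intable (π/2 + 2*π*n) (π/2 + 2*π*n + 2*π))
      rw [h, show π/2 + 2*π*(n:ℝ) + 2*π = π/2 + 2*π*((n:ℝ)+1) by ring]
    have hgoal : (∫ u in (π/2)..(π/2 + 2*π*(((n:ℕ)+1:ℕ):ℝ)), phi u)
        = ∫ u in (π/2)..(π/2 + 2*π*((n:ℝ)+1)), phi u := by push_cast; ring_nf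
    rw [hgoal, ← hadd]
    have := phi_period_nonpos n
    linarith

/-- Core lemma: the tail integral from `π/2` is nonpositive. -/
lemma H_nonpos {T : ℝ} (hT : π/2 ≤ T) : ∫ u in (π/2)..T, phi u ≤ 0 := by
  have hπ := Real.pi_pos
  set k : ℕ := ⌊(T - π/2) / (2*π)⌋₊ with hk
  have hknn : (0:ℝ) ≤ (T - π/2) / (2*π) := by
    apply div_nonneg (by linarith) (by positivity)
  have hlow : π/2 + 2*π*k ≤ T := by
    have h := Nat.floor_le hknn
    rw [← hk] at h
    have := (le_div_iff₀ (by positivity : (0:ℝ) < 2*π)).mp h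
    linarith
  have hhigh : T ≤ π/2 + 2*π*((k:ℝ)+1) := by
    have h := Nat.lt_floor_add_one ((T - π/2) / (2*π))
    rw [← hk] at h
    have := (div_lt_iff₀ (by positivity : (0:ℝ) < 2*π)).mp h
    nlinarith
  rcases le_or_gt T (π/2 + 2*π*k + π) with hcase | hcase
  · have hadd := intervalIntegral.integral_add_adjacent_intervals
      (phi_intable (π/2) (π/2 + 2*π*k)) (phi_intable (π/2 + 2*π*k) T)
    rw [← hadd]
    have h1 := H_nonpos_at k
    have h2 : (∫ u in (π/2 + 2*π*(k:ℝ))..T, phi u) ≤ 0 := by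
      have hptw : ∀ u ∈ Set.Icc (π/2 + 2*π*(k:ℝ)) T, phi u ≤ (fun _ => (0:ℝ)) u := by
        intro u hu
        exact phi_nonpos (cos_nonpos_shift k hu.1 (le_trans hu.2 hcase))
      have := intervalIntegral.integral_mono_on hlow (phi_intable _ _)
        intervalIntegrable_const hptw
      simpa using this
    linarith
  · have hadd := intervalIntegral.integral_add_adjacent_intervals
      (phi_intable (π/2) T) (phi_intable T (π/2 + 2*π*((k:ℝ)+1)))
    have h1 : (∫ u in (π/2)..(π/2 + 2*π*((k:ℝ)+1)), phi u) ≤ 0 := by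
      have h := H_nonpos_at (k+1)
      rw [show ((((k:ℕ)+1:ℕ)):ℝ) = (k:ℝ)+1 by push_cast; ring] at h
      exact h
    have h2 : 0 ≤ ∫ u in T..(π/2 + 2*π*((k:ℝ)+1)), phi u := by
      have hptw : ∀ u ∈ Set.Icc T (π/2 + 2*π*((k:ℝ)+1)), (fun _ => (0:ℝ)) u ≤ phi u := by
        intro u hu
        exact phi_nonneg (cos_nonneg_shift k (by linarith [hu.1]) hu.2)
      have := intervalIntegral.integral_mono_on hhigh intervalIntegrable_const
        (phi_intable _ _) hptw
      simpa using this
    linarith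

/-- One-variable main theorem. -/
lemma phi_main {T : ℝ} (hT : 0 < T) :
    (∫ u in (-T)..T, phi u) ≤ ∫ u in (-(π/2))..(π/2), phi u := by
  have hπ := Real.pi_pos
  rcases le_or_gt T (π/2) with hcase | hcase
  · have hadd1 := intervalIntegral.integral_add_adjacent_intervals
      (phi_intable (-(π/2)) (-T)) (phi_intable (-T) T)
    have hadd2 := intervalIntegral.integral_add_adjacent_intervals
      (phi_intable (-(π/2)) T) (phi_intable T (π/2))
    have hside : 0 ≤ ∫ u in T..(π/2), phi u := by
      apply intervalIntegral.integral_nonneg hcase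
      intro u hu
      exact phi_nonneg (Real.cos_nonneg_of_mem_Icc ⟨by linarith [hu.1], hu.2⟩)
    have hsideneg : 0 ≤ ∫ u in (-(π/2))..(-T), phi u := by
      rw [phi_int_neg]; exact hside
    linarith
  · have hadd1 := intervalIntegral.integral_add_adjacent_intervals
      (phi_intable (-T) (-(π/2))) (phi_intable (-(π/2)) (π/2))
    have hadd2 := intervalIntegral.integral_add_adjacent_intervals
      (phi_intable (-T) (π/2)) (phi_intable (π/2) T)
    have hside : (∫ u in (π/2)..T, phi u) ≤ 0 := H_nonpos (le_of_lt hcase)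
    have hsideneg : (∫ u in (-T)..(-(π/2)), phi u) ≤ 0 := by
      rw [phi_int_neg]; exact hside
    linarith

/-- The uncertainty relation Eq. (48) of the paper: the separation
`g(δ) = ∫_{−δ}^{δ} (sin²(Px) − (cos(Px)−1)²)/(Pπx²) dx` between the constant-case
and worst-case balanced detection probabilities attains its global maximum over
`δ > 0` at `δ = π/(2P)`. -/
theorem separation_maximized_at_uncertainty_relation
    (P : ℝ) (hP : 0 < P) :
    ∀ δ > (0 : ℝ),
      (∫ x in (-δ)..δ,
          (Real.sin (P * x) ^ 2 - (Real.cos (P * x) - 1) ^ 2) / (P * π * x ^ 2)) ≤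
      ∫ x in (-(π / (2 * P)))..(π / (2 * P)),
          (Real.sin (P * x) ^ 2 - (Real.cos (P * x) - 1) ^ 2) / (P * π * x ^ 2) := by
  intro δ hδ
  have hπ := Real.pi_pos
  have key : ∀ x : ℝ, (Real.sin (P * x) ^ 2 - (Real.cos (P * x) - 1) ^ 2) / (P * π * x ^ 2)
      = (P / π) * phi (P * x) := by
    intro x
    rcases eq_or_ne x 0 with h | h
    · simp [h, phi]
    · unfold phi
      rw [mul_pow]
      field_simp
  have conv : ∀ a b : ℝ, (∫ x in a..b,
      (Real.sin (P * x) ^ 2 - (Real.cos (P * x) - 1) ^ 2) / (P * π * x ^ 2))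
      = (1/π) * ∫ u in (P*a)..(P*b), phi u := by
    intro a b
    simp_rw [key]
    rw [intervalIntegral.integral_const_mul,
      intervalIntegral.integral_comp_mul_left phi (ne_of_gt hP)]
    rw [smul_eq_mul]
    field_simp
  rw [conv, conv]
  have h1 : P * (π / (2 * P)) = π / 2 := by field_simp
  have h2 : P * -(π / (2 * P)) = -(π / 2) := by
    rw [mul_neg, h1]
  rw [h1, h2]
  have hmain := phi_main (T := P * δ) (by positivity)
  have hPδ : P * -δ = -(P*δ) := by ring
  rw [hPδ]
  have hπinv : (0:ℝ) ≤ 1/π := by positivity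
  exact mul_le_mul_of_nonneg_left hmain hπinv
end

section
/- Let P > 0 and define, for δ > 0, the separation g(δ) = ∫_{−δ}^{δ} (sin²(P x) − (cos(P x) − 1)²) / (P π x²) dx. Then g is strictly increasing on (0, π/(2P)), strictly decreasing on (π/(2P), π/P), and g(π/(2P)) > 0. -/
open Real intervalIntegral Set

namespace SepAux

noncomputable def f (P x : ℝ) : ℝ :=
  (Real.sin (P * x) ^ 2 - (Real.cos (P * x) - 1) ^ 2) / (P * π * x ^ 2)

lemma one_sub_cos_le (t : ℝ) : 1 - Real.cos t ≤ t ^ 2 / 2 := by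
  have h1 : Real.cos t = 1 - 2 * Real.sin (t / 2) ^ 2 := by
    have h := Real.cos_two_mul (t / 2)
    have h2 : Real.cos (t / 2) ^ 2 = 1 - Real.sin (t / 2) ^ 2 := Real.cos_sq' (t / 2)
    rw [show 2 * (t / 2) = t by ring] at h
    rw [h, h2]; ring
  have h3 : Real.sin (t / 2) ^ 2 ≤ (t / 2) ^ 2 := Real.sin_sq_le_sq
  nlinarith

lemma abs_f_le (P : ℝ) (hP : 0 < P) (x : ℝ) : |f P x| ≤ P / π := by
  have hπ := Real.pi_pos
  rcases eq_or_ne x 0 with rfl | hx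
  · simp [f]
    positivity
  · have hden : 0 < P * π * x ^ 2 := by positivity
    rw [f, abs_div, abs_of_pos hden, div_le_div_iff₀ hden (by positivity)]
    have hc1 : Real.cos (P * x) ≤ 1 := Real.cos_le_one _
    have hc2 : -1 ≤ Real.cos (P * x) := Real.neg_one_le_cos _
    have hub : 1 - Real.cos (P * x) ≤ (P * x) ^ 2 / 2 := one_sub_cos_le (P * x)
    have hs : Real.sin (P * x) ^ 2 = 1 - Real.cos (P * x) ^ 2 := Real.sin_sq (P * x)
    have hkey : |Real.sin (P * x) ^ 2 - (Real.cos (P * x) - 1) ^ 2| ≤ (P * x) ^ 2 := by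
      rw [abs_le]
      constructor <;> nlinarith
    have hm := mul_le_mul_of_nonneg_right hkey hπ.le
    nlinarith

lemma measurable_f (P : ℝ) : Measurable (f P) := by
  unfold f
  fun_prop

lemma intInt (P : ℝ) (hP : 0 < P) (a b : ℝ) :
    IntervalIntegrable (f P) MeasureTheory.volume a b := by
  apply (_root_.intervalIntegrable_const (c := P / π)).mono_fun
    (measurable_f P).aestronglyMeasurable
  filter_upwards with x
  rw [Real.norm_eq_abs, Real.norm_eq_abs,
    abs_of_pos (by positivity : (0:ℝ) < P / π)]
  exact abs_f_le P hP x

lemma f_pos (P : ℝ) (hP : 0 < P) {x : ℝ} (hx : x ≠ 0) (h : |P * x| < π / 2) :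
    0 < f P x := by
  have hπ := Real.pi_pos
  have hden : 0 < P * π * x ^ 2 := by positivity
  apply div_pos _ hden
  set t := P * x with ht
  have ht0 : t ≠ 0 := mul_ne_zero hP.ne' hx
  have habs := abs_lt.1 h
  have hcpos : 0 < Real.cos t :=
    Real.cos_pos_of_mem_Ioo ⟨by linarith [habs.1], habs.2⟩
  have hclt : Real.cos t < 1 := by
    rcases lt_or_eq_of_le (Real.cos_le_one t) with h' | h'
    · exact h'
    · exfalso
      have := (Real.cos_eq_one_iff_of_lt_of_lt
        (by linarith [habs.1] : -(2 * π) < t) (by linarith [habs.2])).1 h'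
      exact ht0 this
  have hs : Real.sin t ^ 2 = 1 - Real.cos t ^ 2 := Real.sin_sq t
  nlinarith

lemma f_neg (P : ℝ) (hP : 0 < P) {x : ℝ} (h1 : π / 2 < |P * x|) (h2 : |P * x| < π) :
    f P x < 0 := by
  have hπ := Real.pi_pos
  have hx : x ≠ 0 := by
    intro h; rw [h, mul_zero, abs_zero] at h1; linarith
  have hden : 0 < P * π * x ^ 2 := by positivity
  apply div_neg_of_neg_of_pos _ hden
  set t := P * x with ht
  have hcos : Real.cos t < 0 := by
    rw [← Real.cos_abs]
    exact Real.cos_neg_of_pi_div_two_lt_of_lt h1 (by linarith)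
  have hc2 : -1 ≤ Real.cos t := Real.neg_one_le_cos t
  have hs : Real.sin t ^ 2 = 1 - Real.cos t ^ 2 := Real.sin_sq t
  nlinarith

end SepAux

/-- Refinement of the optimality condition Eq. (47) of the paper: the separation
`g(δ) = ∫_{−δ}^{δ} (sin²(Px) − (cos(Px)−1)²)/(Pπx²) dx` is strictly increasing on
`(0, π/(2P))`, strictly decreasing on `(π/(2P), π/P)`, and positive at the optimum
`δ = π/(2P)`. -/
theorem separation_monotonicity
    (P : ℝ) (hP : 0 < P) :
    letI g : ℝ → ℝ := fun δ => ∫ x in (-δ)..δ,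
      (Real.sin (P * x) ^ 2 - (Real.cos (P * x) - 1) ^ 2) / (P * π * x ^ 2)
    StrictMonoOn g (Set.Ioo 0 (π / (2 * P))) ∧
    StrictAntiOn g (Set.Ioo (π / (2 * P)) (π / P)) ∧
    0 < g (π / (2 * P)) := by
  set g : ℝ → ℝ := fun δ => ∫ x in (-δ)..δ,
      (Real.sin (P * x) ^ 2 - (Real.cos (P * x) - 1) ^ 2) / (P * π * x ^ 2) with hgdef
  have hπ := Real.pi_pos
  have hg : ∀ δ, g δ = ∫ x in (-δ)..δ, SepAux.f P x := fun δ => rfl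
  have hint := SepAux.intInt P hP
  have hsplit : ∀ a b : ℝ, g b = (∫ x in (-b)..(-a), SepAux.f P x) + g a
      + ∫ x in a..b, SepAux.f P x := by
    intro a b
    rw [hg,
      ← intervalIntegral.integral_add_adjacent_intervals (hint (-b) a) (hint a b),
      ← intervalIntegral.integral_add_adjacent_intervals (hint (-b) (-a)) (hint (-a) a), hg a]
  have hPc : P * (π / (2 * P)) = π / 2 := by field_simp
  refine ⟨?_, ?_, ?_⟩
  · intro a ha b hb hab
    have ha0 : 0 < a := ha.1
    have hb2 : b < π / (2 * P) := hb.2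
    have I2 : 0 < ∫ x in a..b, SepAux.f P x := by
      apply intervalIntegral_pos_of_pos_on (hint a b) _ hab
      intro x hx
      have hx0 : 0 < x := lt_trans ha0 hx.1
      apply SepAux.f_pos P hP hx0.ne'
      rw [abs_of_pos (by positivity)]
      calc P * x < P * (π / (2 * P)) :=
            mul_lt_mul_of_pos_left (lt_trans hx.2 hb2) hP
        _ = π / 2 := hPc
    have I1 : 0 < ∫ x in (-b)..(-a), SepAux.f P x := by
      apply intervalIntegral_pos_of_pos_on (hint (-b) (-a)) _ (by linarith)
      intro x hx
      have hx0 : x < 0 := lt_trans hx.2 (by linarith)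
      apply SepAux.f_pos P hP hx0.ne
      rw [abs_of_neg (by nlinarith)]
      have : -x < π / (2 * P) := by
        have := hx.1; linarith
      calc -(P * x) = P * (-x) := by ring
        _ < P * (π / (2 * P)) := mul_lt_mul_of_pos_left this hP
        _ = π / 2 := hPc
    have := hsplit a b
    linarith
  · intro a ha b hb hab
    have ha1 : π / (2 * P) < a := ha.1
    have hb2 : b < π / P := hb.2
    have ha0 : 0 < a := lt_trans (by positivity) ha1
    have hPc' : P * (π / P) = π := by field_simp
    have I2 : (∫ x in a..b, SepAux.f P x) < 0 := by
      have : 0 < ∫ x in a..b, -SepAux.f P x := by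
        apply intervalIntegral_pos_of_pos_on ((hint a b).neg) _ hab
        intro x hx
        have hx0 : 0 < x := lt_trans ha0 hx.1
        have hxl : π / (2 * P) < x := lt_trans ha1 hx.1
        refine neg_pos.mpr (SepAux.f_neg P hP ?_ ?_)
        · rw [abs_of_pos (by positivity)]
          calc π / 2 = P * (π / (2 * P)) := hPc.symm
            _ < P * x := mul_lt_mul_of_pos_left hxl hP
        · rw [abs_of_pos (by positivity)]
          calc P * x < P * (π / P) :=
                mul_lt_mul_of_pos_left (lt_trans hx.2 hb2) hP
            _ = π := hPc'
      rw [intervalIntegral.integral_neg] at this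
      linarith
    have I1 : (∫ x in (-b)..(-a), SepAux.f P x) < 0 := by
      have : 0 < ∫ x in (-b)..(-a), -SepAux.f P x := by
        apply intervalIntegral_pos_of_pos_on ((hint (-b) (-a)).neg) _ (by linarith)
        intro x hx
        have hx0 : x < 0 := lt_trans hx.2 (by linarith)
        refine neg_pos.mpr (SepAux.f_neg P hP ?_ ?_)
        · rw [abs_of_neg (by nlinarith)]
          have hxl : π / (2 * P) < -x := by have := hx.2; linarith
          calc π / 2 = P * (π / (2 * P)) := hPc.symm
            _ < P * (-x) := mul_lt_mul_of_pos_left hxl hP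
            _ = -(P * x) := by ring
        · rw [abs_of_neg (by nlinarith)]
          have hxl : -x < π / P := by have := hx.1; linarith
          calc -(P * x) = P * (-x) := by ring
            _ < P * (π / P) := mul_lt_mul_of_pos_left hxl hP
            _ = π := hPc'
      rw [intervalIntegral.integral_neg] at this
      linarith
    have := hsplit a b
    linarith
  · set c := π / (2 * P) with hc
    have hc0 : 0 < c := by positivity
    have hsplit0 : g c = (∫ x in (-c)..0, SepAux.f P x) + ∫ x in (0:ℝ)..c, SepAux.f P x := by
      rw [hg, ← intervalIntegral.integral_add_adjacent_intervals (hint (-c) 0) (hint 0 c)]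
    have I2 : 0 < ∫ x in (0:ℝ)..c, SepAux.f P x := by
      apply intervalIntegral_pos_of_pos_on (hint 0 c) _ hc0
      intro x hx
      apply SepAux.f_pos P hP hx.1.ne'
      rw [abs_of_pos (mul_pos hP hx.1)]
      calc P * x < P * c := mul_lt_mul_of_pos_left hx.2 hP
        _ = π / 2 := hPc
    have I1 : 0 < ∫ x in (-c)..0, SepAux.f P x := by
      apply intervalIntegral_pos_of_pos_on (hint (-c) 0) _ (by linarith)
      intro x hx
      have hx0 : x < 0 := hx.2
      apply SepAux.f_pos P hP hx0.ne
      rw [abs_of_neg (by nlinarith)]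
      have : -x < c := by have := hx.1; linarith
      calc -(P * x) = P * (-x) := by ring
        _ < P * c := mul_lt_mul_of_pos_left this hP
        _ = π / 2 := hPc
    rw [hsplit0]
    linarith
end

section
/- Let P > 0 and δ > 0. Then ∫_{−δ}^{δ} sin²(P x) / (P π x²) dx = (cos(2 δ P) + 2 δ P · Si(2 δ P) − 1) / (δ P π), where Si(z) = ∫_{0}^{z} (sin t)/t dt is the sine integral. -/
open Real intervalIntegral MeasureTheory Filter Set

noncomputable def mySinc (x : ℝ) : ℝ := if x = 0 then 1 else Real.sin x / x

lemma mySinc_ne (x : ℝ) (hx : x ≠ 0) : mySinc x = Real.sin x / x := if_neg hx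

lemma mySinc_even (x : ℝ) : mySinc (-x) = mySinc x := by
  by_cases hx : x = 0
  · simp [hx]
  · rw [mySinc_ne _ hx, mySinc_ne _ (neg_ne_zero.mpr hx), Real.sin_neg, neg_div_neg_eq]

lemma mySinc_cont : Continuous mySinc := by
  rw [continuous_iff_continuousAt]
  intro x
  by_cases hx : x = 0
  · subst hx
    have h := (Real.hasDerivAt_sin 0)
    rw [hasDerivAt_iff_tendsto_slope] at h
    rw [Real.cos_zero] at h
    have h2 : Tendsto mySinc (nhdsWithin 0 {(0:ℝ)}ᶜ) (nhds 1) := by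
      refine h.congr' ?_
      filter_upwards [self_mem_nhdsWithin] with y hy
      simp [slope, hy, mySinc_ne _ hy, Real.sin_zero, div_eq_inv_mul]
    rw [ContinuousAt, ← nhdsNE_sup_pure 0, tendsto_sup]
    exact ⟨by simpa [mySinc] using h2, tendsto_pure_nhds _ _⟩
  · have : (fun y => Real.sin y / y) =ᶠ[nhds x] mySinc := by
      filter_upwards [isOpen_ne.mem_nhds hx] with y hy
      exact (mySinc_ne y hy).symm
    exact ContinuousAt.congr (by fun_prop (disch := exact hx)) this

noncomputable def Si2 (z : ℝ) : ℝ := ∫ t in (0:ℝ)..z, mySinc t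

lemma ae_ne_zero : ∀ᵐ (x : ℝ), x ≠ 0 := by
  have h : {x : ℝ | ¬ x ≠ 0} = {0} := by ext x; simp
  rw [MeasureTheory.ae_iff, h]
  exact measure_singleton 0

lemma Si2_eq (z : ℝ) : (∫ t in (0:ℝ)..z, Real.sin t / t) = Si2 z := by
  refine intervalIntegral.integral_congr_ae ?_
  filter_upwards [ae_ne_zero] with t ht _
  exact (mySinc_ne t ht).symm

lemma hasDerivAt_Si2 (z : ℝ) : HasDerivAt Si2 (mySinc z) z :=
  intervalIntegral.integral_hasDerivAt_right
    (mySinc_cont.intervalIntegrable _ _)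
    mySinc_cont.stronglyMeasurable.stronglyMeasurableAtFilter
    mySinc_cont.continuousAt

lemma Si2_cont : Continuous Si2 :=
  continuous_iff_continuousAt.mpr fun z => (hasDerivAt_Si2 z).continuousAt

lemma Si2_neg (z : ℝ) : Si2 (-z) = -Si2 z := by
  have h : (∫ t in (0:ℝ)..z, mySinc (-t)) = ∫ t in (-z)..(-0:ℝ), mySinc t :=
    intervalIntegral.integral_comp_neg mySinc
  simp only [mySinc_even, neg_zero] at h
  unfold Si2
  rw [show (∫ t in (0:ℝ)..(-z), mySinc t) = -∫ t in (-z)..(0:ℝ), mySinc t from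
    intervalIntegral.integral_symm _ _, h]

noncomputable def Fprim (P x : ℝ) : ℝ :=
  (P * Si2 (2*P*x) - x * (P * mySinc (P*x))^2) / (P*π)

lemma Fprim_cont (P : ℝ) : Continuous (Fprim P) := by
  unfold Fprim
  exact ((continuous_const.mul (Si2_cont.comp (continuous_const.mul continuous_id))).sub
    (continuous_id.mul ((continuous_const.mul
      (mySinc_cont.comp (continuous_const.mul continuous_id))).pow 2))).div_const _

lemma Gc_eq (P : ℝ) (hP : P ≠ 0) (x : ℝ) (hx : x ≠ 0) :
    (P/π) * mySinc (P*x)^2 = Real.sin (P*x)^2 / (P*π*x^2) := by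
  rw [mySinc_ne _ (mul_ne_zero hP hx)]
  field_simp

lemma Fprim_deriv (P : ℝ) (hP : P ≠ 0) (x : ℝ) (hx : x ≠ 0) :
    HasDerivAt (Fprim P) ((P/π) * mySinc (P*x)^2) x := by
  have hlin : HasDerivAt (fun y : ℝ => 2*P*y) (2*P) x := by
    simpa using (hasDerivAt_id x).const_mul (2*P)
  have hlinP : HasDerivAt (fun y : ℝ => P*y) P x := by
    simpa using (hasDerivAt_id x).const_mul P
  have h1 : HasDerivAt (fun y => Si2 (2*P*y)) (mySinc (2*P*x) * (2*P)) x :=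
    (hasDerivAt_Si2 (2*P*x)).comp x hlin
  have h2 : HasDerivAt (fun y => Real.sin (P*y)) (Real.cos (P*x) * P) x :=
    (Real.hasDerivAt_sin (P*x)).comp x hlinP
  have h3 := h2.pow 2
  have h4 := h3.div (hasDerivAt_id x) hx
  have hH := ((h1.const_mul P).sub h4).div_const (P*π)
  have heq : Fprim P =ᶠ[nhds x]
      (fun y => (P * Si2 (2*P*y) - Real.sin (P*y)^2 / id y) / (P*π)) := by
    filter_upwards [isOpen_ne.mem_nhds hx] with y hy
    unfold Fprim
    rw [mySinc_ne _ (mul_ne_zero hP hy), id]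
    field_simp
  have := hH.congr_of_eventuallyEq heq
  refine this.congr_deriv ?_
  rw [mySinc_ne _ (mul_ne_zero hP hx),
      mySinc_ne _ (mul_ne_zero (mul_ne_zero two_ne_zero hP) hx),
      show (2*P*x) = 2*(P*x) by ring, Real.sin_two_mul]
  have hPx : P*x ≠ 0 := mul_ne_zero hP hx
  have hpi : π ≠ 0 := Real.pi_ne_zero
  simp only [id, Pi.pow_apply]
  field_simp
  ring

/-- Eq. (62) of the paper: the constant-case detection probability on the window
`[−δ, δ]` is `∫_{−δ}^{δ} sin²(Px)/(Pπx²) dx = (cos(2δP) + 2δP·Si(2δP) − 1)/(δPπ)`,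
where `Si` is the sine integral. -/
theorem constant_detection_probability
    (P : ℝ) (hP : 0 < P) (δ : ℝ) (hδ : 0 < δ) :
    letI Si : ℝ → ℝ := fun z => ∫ t in (0 : ℝ)..z, Real.sin t / t
    (∫ x in (-δ)..δ, Real.sin (P * x) ^ 2 / (P * π * x ^ 2)) =
      (Real.cos (2 * δ * P) + 2 * δ * P * Si (2 * δ * P) - 1) / (δ * P * π) := by
  show (∫ x in (-δ)..δ, Real.sin (P * x) ^ 2 / (P * π * x ^ 2)) =
      (Real.cos (2 * δ * P) + 2 * δ * P * (∫ t in (0:ℝ)..(2*δ*P), Real.sin t / t) - 1)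
        / (δ * P * π)
  rw [Si2_eq]
  have hP' : P ≠ 0 := hP.ne'
  have hδ' : δ ≠ 0 := hδ.ne'
  have hGc : Continuous (fun x => (P/π) * mySinc (P*x)^2) :=
    continuous_const.mul ((mySinc_cont.comp (continuous_const.mul continuous_id)).pow 2)
  have hcongr : (∫ x in (-δ)..δ, Real.sin (P * x) ^ 2 / (P * π * x ^ 2)) =
      ∫ x in (-δ)..δ, (P/π) * mySinc (P*x)^2 := by
    refine (intervalIntegral.integral_congr_ae ?_).symm
    filter_upwards [ae_ne_zero] with x hx _
    exact Gc_eq P hP' x hx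
  rw [hcongr]
  have hsplit := intervalIntegral.integral_add_adjacent_intervals
    (hGc.intervalIntegrable (μ := volume) (-δ) 0) (hGc.intervalIntegrable (μ := volume) 0 δ)
  rw [← hsplit]
  have hL : (∫ x in (-δ)..(0:ℝ), (P/π) * mySinc (P*x)^2) = Fprim P 0 - Fprim P (-δ) := by
    refine intervalIntegral.integral_eq_sub_of_hasDerivAt_of_le (by linarith)
      (Fprim_cont P).continuousOn (fun x hx => Fprim_deriv P hP' x (by exact hx.2.ne))
      (hGc.intervalIntegrable _ _)
  have hR : (∫ x in (0:ℝ)..δ, (P/π) * mySinc (P*x)^2) = Fprim P δ - Fprim P 0 := by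
    refine intervalIntegral.integral_eq_sub_of_hasDerivAt_of_le hδ.le
      (Fprim_cont P).continuousOn (fun x hx => Fprim_deriv P hP' x (by exact hx.1.ne'))
      (hGc.intervalIntegrable _ _)
  rw [hL, hR]
  unfold Fprim
  rw [show P * -δ = -(P*δ) by ring, mySinc_even,
      show 2*P*(-δ) = -(2*P*δ) by ring, Si2_neg,
      mySinc_ne _ (mul_ne_zero hP' hδ'),
      show (2:ℝ)*δ*P = 2*P*δ by ring]
  have hcos : Real.cos (2*P*δ) = 1 - 2 * Real.sin (P*δ)^2 := by
    rw [show (2:ℝ)*P*δ = 2*(P*δ) by ring, Real.cos_two_mul]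
    nlinarith [Real.sin_sq_add_cos_sq (P*δ)]
  rw [hcos]
  have hpi : π ≠ 0 := Real.pi_ne_zero
  have hPδ : P*δ ≠ 0 := mul_ne_zero hP' hδ'
  field_simp
  ring
end

section
/- Let P > 0 and δ > 0. Then ∫_{−δ}^{δ} (cos(P x) − 1)² / (P π x²) dx = (−8 sin⁴(δ P / 2) + 4 δ P · Si(δ P) − 2 δ P · Si(2 δ P)) / (δ P π), where Si(z) = ∫_{0}^{z} (sin t)/t dt is the sine integral. -/
open Real intervalIntegral

open MeasureTheory Set Filter in
noncomputable def mySi (z : ℝ) : ℝ := ∫ t in (0 : ℝ)..z, Real.sin t / t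

open MeasureTheory Set Filter

lemma si_meas : Measurable (fun t : ℝ => Real.sin t / t) :=
  Real.measurable_sin.div measurable_id

lemma si_integrable (a b : ℝ) :
    IntervalIntegrable (fun t : ℝ => Real.sin t / t) volume a b := by
  refine IntervalIntegrable.mono_fun' (g := fun _ => (1:ℝ)) intervalIntegrable_const
    si_meas.aestronglyMeasurable.restrict (Eventually.of_forall fun t => ?_)
  show ‖Real.sin t / t‖ ≤ 1
  rw [Real.norm_eq_abs, abs_div]
  rcases eq_or_ne t 0 with h | h
  · simp [h]
  · rw [div_le_one (abs_pos.2 h)]; exact Real.abs_sin_le_abs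

lemma si_hasDeriv {z : ℝ} (hz : z ≠ 0) : HasDerivAt mySi (Real.sin z / z) z :=
  intervalIntegral.integral_hasDerivAt_right (si_integrable 0 z)
    (si_meas.stronglyMeasurable.stronglyMeasurableAtFilter)
    (Real.continuous_sin.continuousAt.div continuousAt_id hz)

lemma si_continuous : Continuous mySi :=
  intervalIntegral.continuous_primitive (fun a b => si_integrable a b) 0

lemma si_neg (z : ℝ) : mySi (-z) = - mySi z := by
  have h : (∫ t in (0:ℝ)..z, Real.sin (-t) / (-t)) =
      ∫ t in (-z)..(0:ℝ), Real.sin t / t := by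
    simpa using intervalIntegral.integral_comp_neg (a := (0:ℝ)) (b := z)
      (fun t => Real.sin t / t)
  have h2 : (∫ t in (0:ℝ)..z, Real.sin (-t) / (-t)) = mySi z := by
    unfold mySi; congr 1; ext t; rw [Real.sin_neg, neg_div_neg_eq]
  have h3 : mySi z = - mySi (-z) := by
    rw [← h2, h, intervalIntegral.integral_symm 0 (-z)]
    rfl
  linarith [h3]

lemma one_sub_cos (u : ℝ) : 1 - Real.cos u = 2 * Real.sin (u / 2) ^ 2 := by
  have := Real.sin_sq_eq_half_sub (u / 2)
  rw [show 2 * (u / 2) = u by ring] at this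
  linarith

lemma cos_sub_one_sq_le (u : ℝ) : (Real.cos u - 1) ^ 2 ≤ u ^ 4 / 4 := by
  have h1 := one_sub_cos u
  have h2 : Real.sin (u / 2) ^ 2 ≤ (u / 2) ^ 2 := Real.sin_sq_le_sq
  nlinarith [sq_nonneg (Real.sin (u / 2)), sq_nonneg u]

noncomputable def myF (P : ℝ) (x : ℝ) : ℝ :=
  -((Real.cos (P * x) - 1) ^ 2) / x + 2 * P * mySi (P * x) - P * mySi (2 * P * x)

lemma myF_deriv (P : ℝ) (hP : P ≠ 0) {x : ℝ} (hx : x ≠ 0) :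
    HasDerivAt (myF P) ((Real.cos (P * x) - 1) ^ 2 / x ^ 2) x := by
  have hPx : P * x ≠ 0 := mul_ne_zero hP hx
  have h2Px : 2 * P * x ≠ 0 := mul_ne_zero (mul_ne_zero two_ne_zero hP) hx
  have hlin : HasDerivAt (fun y : ℝ => P * y) P x := by
    simpa using (hasDerivAt_id x).const_mul P
  have hlin2 : HasDerivAt (fun y : ℝ => 2 * P * y) (2 * P) x := by
    simpa using (hasDerivAt_id x).const_mul (2 * P)
  have hcos : HasDerivAt (fun y : ℝ => Real.cos (P * y)) (-Real.sin (P * x) * P) x :=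
    (Real.hasDerivAt_cos (P * x)).comp x hlin
  have hnum : HasDerivAt (fun y : ℝ => -((Real.cos (P * y) - 1) ^ 2))
      (-(2 * (Real.cos (P * x) - 1) * (-Real.sin (P * x) * P))) x := by
    exact (((hcos.sub_const 1).pow 2).neg).congr_deriv (by ring)
  have h1 : HasDerivAt (fun y : ℝ => -((Real.cos (P * y) - 1) ^ 2) / y)
      ((-(2 * (Real.cos (P * x) - 1) * (-Real.sin (P * x) * P)) * x -
        -((Real.cos (P * x) - 1) ^ 2) * 1) / x ^ 2) x :=
    hnum.div (hasDerivAt_id x) hx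
  have h2 : HasDerivAt (fun y : ℝ => 2 * P * mySi (P * y))
      (2 * P * (Real.sin (P * x) / (P * x) * P)) x :=
    (((si_hasDeriv hPx).comp x hlin)).const_mul (2 * P)
  have h3 : HasDerivAt (fun y : ℝ => P * mySi (2 * P * y))
      (P * (Real.sin (2 * P * x) / (2 * P * x) * (2 * P))) x :=
    (((si_hasDeriv h2Px).comp x hlin2)).const_mul P
  have h := (h1.add h2).sub h3
  have hF : myF P = fun y : ℝ =>
      -((Real.cos (P * y) - 1) ^ 2) / y + 2 * P * mySi (P * y) - P * mySi (2 * P * y) := rfl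
  rw [hF]
  refine h.congr_deriv ?_
  have hsin2 : Real.sin (2 * P * x) = 2 * Real.sin (P * x) * Real.cos (P * x) := by
    rw [mul_assoc, Real.sin_two_mul]
  rw [hsin2]
  field_simp
  ring

lemma f1_bound (P x : ℝ) (hx : x ≠ 0) :
    ‖-((Real.cos (P * x) - 1) ^ 2) / x‖ ≤ P ^ 4 * |x| ^ 3 / 4 := by
  have habs : (0:ℝ) < |x| := abs_pos.2 hx
  rw [Real.norm_eq_abs, abs_div, abs_neg, abs_of_nonneg (sq_nonneg _)]
  have hb : (Real.cos (P * x) - 1) ^ 2 ≤ P ^ 4 * x ^ 4 / 4 := by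
    have h := cos_sub_one_sq_le (P * x)
    nlinarith [h]
  rw [div_le_iff₀ habs]
  have hx4 : x ^ 4 = |x| ^ 4 := by
    rw [← abs_pow]; exact (abs_of_nonneg (by positivity)).symm
  calc (Real.cos (P * x) - 1) ^ 2 ≤ P ^ 4 * x ^ 4 / 4 := hb
    _ = P ^ 4 * |x| ^ 3 / 4 * |x| := by rw [hx4]; ring

lemma f1_cont (P : ℝ) : Continuous (fun x : ℝ => -((Real.cos (P * x) - 1) ^ 2) / x) := by
  rw [continuous_iff_continuousAt]
  intro x
  rcases eq_or_ne x 0 with rfl | hx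
  · have ht : Tendsto (fun x : ℝ => -((Real.cos (P * x) - 1) ^ 2) / x) (nhds 0) (nhds 0) := by
      apply squeeze_zero_norm (a := fun x : ℝ => P ^ 4 * |x| ^ 3 / 4)
      · intro y
        rcases eq_or_ne y 0 with rfl | hy
        · simp
        · exact f1_bound P y hy
      · have hc : Continuous fun x : ℝ => P ^ 4 * |x| ^ 3 / 4 := by continuity
        have := hc.tendsto 0
        simpa using this
    simpa [ContinuousAt] using ht
  · exact ContinuousAt.div (by fun_prop) continuousAt_id hx

lemma myF_cont (P : ℝ) : Continuous (myF P) := by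
  unfold myF
  refine ((f1_cont P).add ?_).sub ?_
  · exact continuous_const.mul (si_continuous.comp (continuous_const.mul continuous_id))
  · exact continuous_const.mul (si_continuous.comp (continuous_const.mul continuous_id))

lemma h_integrable (P a b : ℝ) :
    IntervalIntegrable (fun x : ℝ => (Real.cos (P * x) - 1) ^ 2 / x ^ 2) volume a b := by
  refine IntervalIntegrable.mono_fun' (g := fun x => P ^ 4 * x ^ 2 / 4)
    (Continuous.intervalIntegrable (by continuity) a b)
    (Measurable.aestronglyMeasurable
      ((((Real.measurable_cos.comp (measurable_id.const_mul P)).sub measurable_const).pow_const 2).div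
        (measurable_id.pow_const 2))).restrict
    (Eventually.of_forall fun x => ?_)
  show ‖(Real.cos (P * x) - 1) ^ 2 / x ^ 2‖ ≤ P ^ 4 * x ^ 2 / 4
  rcases eq_or_ne x 0 with rfl | hx
  · simp
  · have hx2 : (0:ℝ) < x ^ 2 := by positivity
    rw [Real.norm_eq_abs, abs_div, abs_of_nonneg (sq_nonneg _), abs_of_nonneg (le_of_lt hx2),
      div_le_iff₀ hx2]
    nlinarith [cos_sub_one_sq_le (P * x)]

/-- Eq. (64) of the paper: the worst-case balanced (anti-symmetric balanced)
detection probability on the window `[−δ, δ]` is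
`∫_{−δ}^{δ} (cos(Px)−1)²/(Pπx²) dx
  = (−8 sin⁴(δP/2) + 4δP·Si(δP) − 2δP·Si(2δP))/(δPπ)`,
where `Si` is the sine integral. -/
theorem asb_detection_probability
    (P : ℝ) (hP : 0 < P) (δ : ℝ) (hδ : 0 < δ) :
    letI Si : ℝ → ℝ := fun z => ∫ t in (0 : ℝ)..z, Real.sin t / t
    (∫ x in (-δ)..δ, (Real.cos (P * x) - 1) ^ 2 / (P * π * x ^ 2)) =
      (-8 * Real.sin (δ * P / 2) ^ 4 + 4 * δ * P * Si (δ * P)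
        - 2 * δ * P * Si (2 * δ * P)) / (δ * P * π) := by
  show (∫ x in (-δ)..δ, (Real.cos (P * x) - 1) ^ 2 / (P * π * x ^ 2)) =
      (-8 * Real.sin (δ * P / 2) ^ 4 + 4 * δ * P * mySi (δ * P)
        - 2 * δ * P * mySi (2 * δ * P)) / (δ * P * π)
  have hPne : P ≠ 0 := ne_of_gt hP
  have hδne : δ ≠ 0 := ne_of_gt hδ
  have hπ : π ≠ 0 := Real.pi_ne_zero
  have hrw : ∀ x : ℝ, (Real.cos (P * x) - 1) ^ 2 / (P * π * x ^ 2)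
      = (P * π)⁻¹ * ((Real.cos (P * x) - 1) ^ 2 / x ^ 2) := fun x => by
    rw [div_mul_eq_div_div_swap, div_eq_inv_mul]
  simp_rw [hrw]
  rw [intervalIntegral.integral_const_mul]
  have key : (∫ x in (-δ)..δ, (Real.cos (P * x) - 1) ^ 2 / x ^ 2)
      = myF P δ - myF P (-δ) := by
    refine integral_eq_of_hasDerivAt_off_countable (myF P)
      (fun x => (Real.cos (P * x) - 1) ^ 2 / x ^ 2) (countable_singleton 0)
      ((myF_cont P).continuousOn) (fun x hx => myF_deriv P hPne ?_) (h_integrable P _ _)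
    simpa using hx.2
  have hFneg : myF P (-δ) = - myF P δ := by
    unfold myF
    rw [show P * -δ = -(P * δ) by ring, show 2 * P * -δ = -(2 * P * δ) by ring,
      si_neg, si_neg, Real.cos_neg]
    field_simp
    ring
  rw [key, hFneg, sub_neg_eq_add]
  unfold myF
  rw [show P * δ = δ * P from mul_comm P δ, show 2 * P * δ = 2 * (δ * P) by ring,
    show 2 * δ * P = 2 * (δ * P) by ring]
  have hsin : (Real.cos (δ * P) - 1) ^ 2 = 4 * Real.sin (δ * P / 2) ^ 4 := by
    have h := one_sub_cos (δ * P)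
    nlinarith [h]
  rw [hsin]
  field_simp
  ring
end
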